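/- arXiv:1506.03779 — 8 statements merged into one kernel-verified Lean document; each statement's English description precedes it below -/
import Mathlib

section
/- Let G be a graph and let k be an integer with 1 ≤ k ≤ ⌊δ(G)/2⌋. A set M ⊆ V(G) is both a global defensive (2k)-alliance and a global offensive (2k)-alliance in G if and only if the function f with f(v) = 1 for v ∈ M and f(v) = -1 for v ∉ M is a signed total (2k)-dominating function for G. -/
open Finset

/-- Number of neighbors of `v` inside `S`. -/
def degIn {V : Type*} [Fintype V] [DecidableEq V] (G : SimpleGraph V) [DecidableRel G.Adj]
    (S : Finset V) (v : V) : ℕ := (G.neighborFinset v ∩ S).card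

/-- `M` is an open `k`-monopoly: `δ_M(v) ≥ δ(v)/2 + k` for every vertex `v`. -/
def IsKMonopoly {V : Type*} [Fintype V] [DecidableEq V] (G : SimpleGraph V) [DecidableRel G.Adj]
    (k : ℤ) (M : Finset V) : Prop :=
  M.Nonempty ∧ ∀ v : V, ((degIn G M v : ℚ)) ≥ (G.degree v : ℚ) / 2 + (k : ℚ)

/-- The open `k`-monopoly number: minimum cardinality of an open `k`-monopoly. -/
noncomputable def monopolyNumber {V : Type*} [Fintype V] [DecidableEq V] (G : SimpleGraph V)
    [DecidableRel G.Adj] (k : ℤ) : ℕ :=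
  sInf {n : ℕ | ∃ M : Finset V, IsKMonopoly G k M ∧ M.card = n}

lemma Finset.sum_ite_mem_one_neg_one {α : Type*} [Fintype α] [DecidableEq α] (s M : Finset α) :
    ∑ u ∈ s, (if u ∈ M then (1 : ℤ) else -1) = #(s ∩ M) - #(s ∩ Mᶜ) := by
  rw [sum_ite, sum_const, sum_const, filter_mem_eq_inter, filter_notMem_eq_sdiff,
    sdiff_eq_inter_compl]
  simp only [nsmul_eq_mul, mul_one, mul_neg]
  ring

lemma sum_neighborFinset_sign_eq_degIn_sub_degIn_compl {V : Type*} [Fintype V] [DecidableEq V]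
    (G : SimpleGraph V) [DecidableRel G.Adj] (M : Finset V) (v : V) :
    ∑ u ∈ G.neighborFinset v, (if u ∈ M then (1 : ℤ) else -1) =
      (degIn G M v : ℤ) - degIn G Mᶜ v :=
  Finset.sum_ite_mem_one_neg_one _ _

theorem stmt1_general {V : Type*} [Fintype V] [DecidableEq V] (G : SimpleGraph V) [DecidableRel G.Adj]
    (k : ℤ) (M : Finset V) :
    (∀ v : V, (degIn G M v : ℤ) ≥ (degIn G Mᶜ v : ℤ) + 2 * k) ↔
      (∀ v : V, (∑ u ∈ G.neighborFinset v, (if u ∈ M then (1 : ℤ) else -1)) ≥ 2 * k) := by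
  simp only [sum_neighborFinset_sign_eq_degIn_sub_degIn_compl, ge_iff_le, le_sub_iff_add_le']

theorem stmt1 {V : Type*} [Fintype V] [DecidableEq V] (G : SimpleGraph V) [DecidableRel G.Adj]
    (k : ℤ) (hk0 : 1 ≤ k) (hk1 : (k : ℚ) ≤ ⌊(G.minDegree : ℚ) / 2⌋) (M : Finset V) :
    (∀ v : V, (degIn G M v : ℤ) ≥ (degIn G Mᶜ v : ℤ) + 2 * k) ↔
      (∀ v : V, (∑ u ∈ G.neighborFinset v, (if u ∈ M then (1 : ℤ) else -1)) ≥ 2 * k) :=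
  stmt1_general G k M
end

section
/- For any graph G of order n and any integer k with 0 ≤ k ≤ δ(G), the signed (k+1)-domination number of G equals twice the global powerful k-alliance number of G minus n, i.e., γ_s^{k+1}(G) = 2γ_k^p(G) − n (assuming G admits a global powerful k-alliance). -/
open Finset

/-- `S` is a global powerful `k`-alliance. -/
def IsGlobalPowerfulAlliance {V : Type*} [Fintype V] [DecidableEq V] (G : SimpleGraph V)
    [DecidableRel G.Adj] (k : ℤ) (S : Finset V) : Prop :=
  S.Nonempty ∧ (∀ v ∈ S, (degIn G S v : ℤ) ≥ (degIn G Sᶜ v : ℤ) + k) ∧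
    (∀ v ∉ S, (degIn G S v : ℤ) ≥ (degIn G Sᶜ v : ℤ) + k + 2)

/-!
A function `f : V → {-1, 1}` is the sign vector `v ↦ if v ∈ S then 1 else -1` of the set
`S = f⁻¹(1)`, and `∑_{u ∈ N(v)} f u = δ_S(v) - δ_{V∖S}(v)`. Hence `f` is signed
`(k+1)`-dominating exactly when `S` satisfies the two powerful-alliance inequalities (the extra
`+2` outside `S` compensates `f v = -1`), and its weight is `2|S| - n`. Since `S ↦ 2|S| - n` is
monotone, the two minima correspond.
-/

section SignVector

variable {V : Type*} [DecidableEq V]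

def signVector (S : Finset V) (v : V) : ℤ := if v ∈ S then 1 else -1

lemma sum_signVector (S T : Finset V) :
    ∑ u ∈ T, signVector S u = (#(T ∩ S) : ℤ) - #(T \ S) := by
  simp only [signVector, sum_ite, sum_const, filter_mem_eq_inter, filter_notMem_eq_sdiff]
  simp [sub_eq_add_neg]

lemma sum_univ_signVector [Fintype V] (S : Finset V) :
    ∑ v, signVector S v = 2 * (#S : ℤ) - Fintype.card V := by
  rw [sum_signVector, univ_inter, ← compl_eq_univ_sdiff, card_compl,
    Nat.cast_sub (card_le_univ S)]
  ring

lemma eq_signVector_of_forall_eq_one_or_eq_neg_one [Fintype V] {f : V → ℤ}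
    (hf : ∀ v, f v = 1 ∨ f v = -1) : f = signVector {v | f v = 1} := by
  ext v
  rcases hf v with h | h <;> simp [signVector, h]

lemma signVector_eq_one_or_eq_neg_one (S : Finset V) (v : V) :
    signVector S v = 1 ∨ signVector S v = -1 := by
  unfold signVector; split_ifs <;> simp

end SignVector

section Alliance

variable {V : Type*} [Fintype V] [DecidableEq V] (G : SimpleGraph V) [DecidableRel G.Adj]

lemma sum_neighborFinset_signVector (S : Finset V) (v : V) :
    ∑ u ∈ G.neighborFinset v, signVector S u = (degIn G S v : ℤ) - degIn G Sᶜ v := by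
  rw [sum_signVector, degIn, degIn, ← sdiff_eq_inter_compl]

lemma signVector_closedNbhd_ge_iff (k : ℤ) (S : Finset V) (v : V) :
    signVector S v + ∑ u ∈ G.neighborFinset v, signVector S u ≥ k + 1 ↔
      (v ∈ S → (degIn G S v : ℤ) ≥ degIn G Sᶜ v + k) ∧
        (v ∉ S → (degIn G S v : ℤ) ≥ degIn G Sᶜ v + k + 2) := by
  rw [sum_neighborFinset_signVector, signVector]
  by_cases hv : v ∈ S <;>
    simp only [hv, ↓reduceIte, not_true_eq_false, not_false_eq_true, forall_const,
      IsEmpty.forall_iff, and_true, true_and] <;> omega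

lemma nonempty_of_forall_degIn_ge {k : ℤ} (hk : 0 ≤ k) {S : Finset V} {v : V}
    (hS : ∀ v ∉ S, (degIn G S v : ℤ) ≥ degIn G Sᶜ v + k + 2) : S.Nonempty := by
  by_cases hv : v ∈ S
  · exact ⟨v, hv⟩
  · have hpos : 0 < degIn G S v := by have := hS v hv; omega
    obtain ⟨u, hu⟩ := card_pos.mp hpos
    exact ⟨u, (mem_inter.mp hu).2⟩

lemma isGlobalPowerfulAlliance_iff_signVector [Nonempty V] {k : ℤ} (hk : 0 ≤ k)
    (S : Finset V) :
    IsGlobalPowerfulAlliance G k S ↔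
      ∀ v, signVector S v + ∑ u ∈ G.neighborFinset v, signVector S u ≥ k + 1 := by
  simp only [signVector_closedNbhd_ge_iff, forall_and]
  refine ⟨fun ⟨_, hin, hout⟩ => ⟨hin, hout⟩, fun ⟨hin, hout⟩ => ⟨?_, hin, hout⟩⟩
  exact nonempty_of_forall_degIn_ge G hk (v := Classical.arbitrary V) hout

end Alliance

theorem stmt3_general {V : Type*} [Fintype V] [DecidableEq V] (G : SimpleGraph V) [DecidableRel G.Adj]
    (k : ℤ) (hk0 : 0 ≤ k)
    (hex : ∃ S : Finset V, IsGlobalPowerfulAlliance G k S) :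
    sInf {w : ℤ | ∃ f : V → ℤ, (∀ v, f v = 1 ∨ f v = -1) ∧
        (∀ v : V, f v + ∑ u ∈ G.neighborFinset v, f u ≥ k + 1) ∧ w = ∑ v, f v} =
      2 * Int.ofNat (sInf {n : ℕ | ∃ S : Finset V, IsGlobalPowerfulAlliance G k S ∧ S.card = n}) -
        (Fintype.card V : ℤ) := by
  obtain ⟨S₀, hS₀⟩ := hex
  have _ : Nonempty V := hS₀.1.to_subtype.map Subtype.val
  set weight : ℕ → ℤ := fun n => 2 * n - Fintype.card V
  have hweight : Monotone weight := fun a b hab => by simp only [weight]; omega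
  have hset : {w : ℤ | ∃ f : V → ℤ, (∀ v, f v = 1 ∨ f v = -1) ∧
      (∀ v : V, f v + ∑ u ∈ G.neighborFinset v, f u ≥ k + 1) ∧ w = ∑ v, f v} =
      weight '' {n : ℕ | ∃ S : Finset V, IsGlobalPowerfulAlliance G k S ∧ S.card = n} := by
    ext w
    simp only [Set.mem_image, weight]
    constructor
    · rintro ⟨f, hf, hdom, rfl⟩
      obtain ⟨S, rfl⟩ : ∃ S, f = signVector S :=
        ⟨_, eq_signVector_of_forall_eq_one_or_eq_neg_one hf⟩
      exact ⟨#S, ⟨S, (isGlobalPowerfulAlliance_iff_signVector G hk0 S).mpr hdom, rfl⟩,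
        (sum_univ_signVector S).symm⟩
    · rintro ⟨_, ⟨S, hS, rfl⟩, rfl⟩
      exact ⟨signVector S, signVector_eq_one_or_eq_neg_one S,
        (isGlobalPowerfulAlliance_iff_signVector G hk0 S).mp hS, (sum_univ_signVector S).symm⟩
  have hne : {n : ℕ | ∃ S : Finset V, IsGlobalPowerfulAlliance G k S ∧ S.card = n}.Nonempty :=
    ⟨_, S₀, hS₀, rfl⟩
  rw [hset, ← hweight.map_csInf hne]
  rfl

theorem stmt3 {V : Type*} [Fintype V] [DecidableEq V] (G : SimpleGraph V) [DecidableRel G.Adj]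
    (k : ℤ) (hk0 : 0 ≤ k) (hk1 : k ≤ (G.minDegree : ℤ))
    (hex : ∃ S : Finset V, IsGlobalPowerfulAlliance G k S) :
    sInf {w : ℤ | ∃ f : V → ℤ, (∀ v, f v = 1 ∨ f v = -1) ∧
        (∀ v : V, f v + ∑ u ∈ G.neighborFinset v, f u ≥ k + 1) ∧ w = ∑ v, f v} =
      2 * Int.ofNat (sInf {n : ℕ | ∃ S : Finset V, IsGlobalPowerfulAlliance G k S ∧ S.card = n}) -
        (Fintype.card V : ℤ) :=
  stmt3_general G k hk0 hex
end

section
/- For any graph G of order n and size m, and every nonzero integer k with 1−⌈δ(G)/2⌉ ≤ k ≤ ⌊δ(G)/2⌋ and k > 0, every open k-monopoly M satisfies |M| ≥ ⌈(3kn − m)/(2k)⌉; in particular M_k(G) ≥ ⌈(3kn − m)/(2k)⌉. -/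
open Finset

/-!
Double counting the edges between `M` and `V` gives `∑_{u ∈ M} deg u = ∑_v δ_M(v) ≥ m + kn`.
Since `δ(v) ≥ δ_M(v) ≥ δ(v)/2 + k`, every vertex has degree at least `2k`, so the vertices
outside `M` carry degree at least `2k(n - |M|)`, whence `∑_{u ∈ M} deg u ≤ 2m - 2k(n - |M|)`.
Comparing the two bounds yields `2k|M| ≥ 3kn - m`.
-/

section

variable {V : Type*} [Fintype V] [DecidableEq V] {G : SimpleGraph V} [DecidableRel G.Adj]

lemma degIn_le_degree (S : Finset V) (v : V) : degIn G S v ≤ G.degree v :=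
  card_le_card inter_subset_left

lemma degIn_univ (v : V) : degIn G univ v = G.degree v := by
  rw [degIn, inter_univ, G.card_neighborFinset_eq_degree]

lemma sum_degIn_eq_sum_degree (S : Finset V) : ∑ v, degIn G S v = ∑ u ∈ S, G.degree u := by
  have hdegIn : ∀ v, degIn G S v = #(S.bipartiteAbove G.Adj v) := fun v => by
    rw [degIn, bipartiteAbove, ← filter_mem_eq_inter]
    congr 1
    ext u
    simp [and_comm]
  have hdegree : ∀ u, G.degree u = #(univ.bipartiteBelow G.Adj u) := fun u => by
    rw [← G.card_neighborFinset_eq_degree, G.neighborFinset_eq_filter, bipartiteBelow]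
    simp only [G.adj_comm]
  simp only [hdegIn, hdegree, sum_card_bipartiteAbove_eq_sum_card_bipartiteBelow]

lemma SimpleGraph.sum_degree_add_mul_card_compl_le {d : ℚ} (S : Finset V)
    (hd : ∀ v ∉ S, d ≤ G.degree v) :
    ∑ u ∈ S, (G.degree u : ℚ) + d * #Sᶜ ≤ 2 * #G.edgeFinset := by
  have hsum : ∑ u ∈ S, (G.degree u : ℚ) + ∑ u ∈ Sᶜ, (G.degree u : ℚ) = 2 * #G.edgeFinset := by
    rw [sum_add_sum_compl]
    exact_mod_cast G.sum_degrees_eq_twice_card_edges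
  have hcompl : d * #Sᶜ ≤ ∑ u ∈ Sᶜ, (G.degree u : ℚ) := by
    rw [mul_comm, ← nsmul_eq_mul, ← sum_const]
    exact sum_le_sum fun v hv => hd v (mem_compl.mp hv)
  linarith

namespace IsKMonopoly

variable {k : ℤ} {M : Finset V}

lemma two_mul_le_degree (hM : IsKMonopoly G k M) (v : V) : 2 * (k : ℚ) ≤ G.degree v := by
  have hle : (degIn G M v : ℚ) ≤ G.degree v := by exact_mod_cast degIn_le_degree M v
  linarith [hM.2 v]

lemma card_edgeFinset_add_le_sum_degree (hM : IsKMonopoly G k M) :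
    (#G.edgeFinset : ℚ) + k * Fintype.card V ≤ ∑ u ∈ M, (G.degree u : ℚ) := by
  have hdeg : ∑ v, (G.degree v : ℚ) = 2 * #G.edgeFinset := by
    exact_mod_cast G.sum_degrees_eq_twice_card_edges
  calc (#G.edgeFinset : ℚ) + k * Fintype.card V = ∑ v, ((G.degree v : ℚ) / 2 + k) := by
        rw [sum_add_distrib, ← sum_div, hdeg, sum_const, card_univ, nsmul_eq_mul]
        ring
    _ ≤ ∑ v, (degIn G M v : ℚ) := sum_le_sum fun v _ => hM.2 v
    _ = ∑ u ∈ M, (G.degree u : ℚ) := by exact_mod_cast sum_degIn_eq_sum_degree M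

lemma three_mul_card_sub_le (hM : IsKMonopoly G k M) :
    3 * k * (Fintype.card V : ℚ) - #G.edgeFinset ≤ 2 * k * #M := by
  have hupper := G.sum_degree_add_mul_card_compl_le M fun v _ => hM.two_mul_le_degree v
  rw [card_compl, Nat.cast_sub M.card_le_univ] at hupper
  linarith [hM.card_edgeFinset_add_le_sum_degree]

lemma ceil_le_card (hk : 0 < k) (hM : IsKMonopoly G k M) :
    ⌈(3 * k * (Fintype.card V : ℚ) - #G.edgeFinset) / (2 * k)⌉ ≤ #M := by
  rw [Int.ceil_le, div_le_iff₀ (by positivity)]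
  push_cast
  linarith [hM.three_mul_card_sub_le]

end IsKMonopoly

lemma isKMonopoly_univ [Nonempty V] {k : ℤ} (hk : 2 * k ≤ G.minDegree) :
    IsKMonopoly G k univ := by
  refine ⟨univ_nonempty, fun v => ?_⟩
  have hdeg : (2 * k : ℚ) ≤ G.degree v := by
    exact_mod_cast hk.trans (by exact_mod_cast G.minDegree_le_degree v)
  rw [degIn_univ]
  linarith

lemma exists_isKMonopoly_card_eq_monopolyNumber {k : ℤ} (h : ∃ M, IsKMonopoly G k M) :
    ∃ M, IsKMonopoly G k M ∧ #M = monopolyNumber G k := by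
  obtain ⟨M, hM⟩ := h
  exact Nat.sInf_mem (s := {n | ∃ M, IsKMonopoly G k M ∧ #M = n}) ⟨#M, M, hM, rfl⟩

end

theorem stmt7 {V : Type*} [Fintype V] [DecidableEq V] (G : SimpleGraph V) [DecidableRel G.Adj]
    (k : ℤ) (hk0 : 0 < k) (hk1 : k ≤ ⌊(G.minDegree : ℚ) / 2⌋) :
    (∀ M : Finset V, IsKMonopoly G k M →
        ⌈((3 * k * (Fintype.card V : ℚ) - (G.edgeFinset.card : ℚ)) / (2 * k) : ℚ)⌉ ≤ (M.card : ℤ)) ∧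
      ⌈((3 * k * (Fintype.card V : ℚ) - (G.edgeFinset.card : ℚ)) / (2 * k) : ℚ)⌉ ≤
        (monopolyNumber G k : ℤ) := by
  refine ⟨fun M hM => hM.ceil_le_card hk0, ?_⟩
  have hmin : 2 * k ≤ G.minDegree := by
    have hk : (k : ℚ) ≤ G.minDegree / 2 := Int.le_floor.mp hk1
    exact_mod_cast (by linarith : (2 * k : ℚ) ≤ G.minDegree)
  have : Nonempty V := by
    by_contra hV
    have : IsEmpty V := not_nonempty_iff.mp hV
    rw [G.minDegree_of_subsingleton] at hmin
    omega
  obtain ⟨M, hM, hcard⟩ := exists_isKMonopoly_card_eq_monopolyNumber ⟨univ, isKMonopoly_univ hmin⟩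
  rw [← hcard]
  exact hM.ceil_le_card hk0
end

section
/- If M is an open k-monopoly in a graph G with k ≥ 1, then the number of edges of the subgraph induced by M is at least k·n, where n is the order of G. -/
/-!
Summing the monopoly inequality over `M` gives `2 |E⟨M⟩| ≥ e(M, Mᶜ) + 2k |M|`, while at a vertex
outside `M` it forces `δ_M(v) ≥ 2k`, so summing over `Mᶜ` gives `e(M, Mᶜ) ≥ 2k |Mᶜ|`.
Adding the two yields `|E⟨M⟩| ≥ k n`.
-/

open Finset

namespace SimpleGraph

variable {V : Type*} [Fintype V] [DecidableEq V] (G : SimpleGraph V) [DecidableRel G.Adj]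

lemma degree_induce_eq_degIn (M : Finset V) (v : (M : Set V)) :
    (G.induce (M : Set V)).degree v = degIn G M v := by
  have h := congrArg card (G.map_neighborFinset_induce v)
  rw [card_map, card_neighborFinset_eq_degree, toFinset_coe] at h
  rw [degIn]
  convert h

lemma sum_degIn_self (M : Finset V) :
    ∑ v ∈ M, degIn G M v = 2 * #(G.induce (M : Set V)).edgeFinset := by
  rw [← sum_degrees_eq_twice_card_edges, ← sum_coe_sort M]
  exact sum_congr rfl fun v _ => (G.degree_induce_eq_degIn M v).symm

lemma degIn_eq_card_bipartiteAbove (S : Finset V) (v : V) :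
    degIn G S v = #(S.bipartiteAbove G.Adj v) := by
  rw [degIn, bipartiteAbove, inter_comm, ← filter_mem_eq_inter]
  simp

lemma sum_degIn_comm (A B : Finset V) :
    ∑ v ∈ A, degIn G B v = ∑ v ∈ B, degIn G A v := by
  simp only [degIn_eq_card_bipartiteAbove]
  rw [sum_card_bipartiteAbove_eq_sum_card_bipartiteBelow]
  simp only [bipartiteBelow, bipartiteAbove, G.adj_comm]

end SimpleGraph

theorem stmt8_general {V : Type*} [Fintype V] [DecidableEq V] (G : SimpleGraph V) [DecidableRel G.Adj]
    (k : ℤ) (M : Finset V)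
    (hmon : ∀ v : V, (degIn G M v : ℤ) ≥ (degIn G Mᶜ v : ℤ) + 2 * k) :
    k * (Fintype.card V : ℤ) ≤ ((G.induce (M : Set V)).edgeFinset.card : ℤ) := by
  have hinside : ∑ v ∈ M, ((degIn G Mᶜ v : ℤ) + 2 * k) ≤ ∑ v ∈ M, (degIn G M v : ℤ) :=
    sum_le_sum fun v _ => hmon v
  have houtside : ∑ v ∈ Mᶜ, 2 * k ≤ ∑ v ∈ Mᶜ, (degIn G M v : ℤ) :=
    sum_le_sum fun v _ => by linarith [hmon v, (degIn G Mᶜ v).cast_nonneg (α := ℤ)]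
  have hedges : ∑ v ∈ M, (degIn G M v : ℤ) = 2 * #(G.induce (M : Set V)).edgeFinset := by
    exact_mod_cast G.sum_degIn_self M
  have hcut : ∑ v ∈ M, (degIn G Mᶜ v : ℤ) = ∑ v ∈ Mᶜ, (degIn G M v : ℤ) := by
    exact_mod_cast G.sum_degIn_comm M Mᶜ
  have hcard : (#M : ℤ) + #Mᶜ = Fintype.card V := by exact_mod_cast card_add_card_compl M
  simp only [sum_add_distrib, sum_const, nsmul_eq_mul] at hinside houtside
  rw [← hcard]
  linarith

theorem stmt8 {V : Type*} [Fintype V] [DecidableEq V] (G : SimpleGraph V) [DecidableRel G.Adj]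
    (k : ℤ) (hk : 1 ≤ k) (M : Finset V) (hM : M.Nonempty)
    (hmon : ∀ v : V, (degIn G M v : ℤ) ≥ (degIn G Mᶜ v : ℤ) + 2 * k) :
    k * (Fintype.card V : ℤ) ≤ ((G.induce (M : Set V)).edgeFinset.card : ℤ) :=
  stmt8_general G k M hmon
end

section
/- Let G be a graph of order n with minimum degree δ ≥ 1. Then M_k(G) = n for some admissible integer k if and only if k = ⌊δ/2⌋ and either (i) δ is even and every vertex of G is adjacent to a vertex of degree δ or δ+1, or (ii) δ is odd and every vertex of G is adjacent to a vertex of degree δ. -/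
/-!
`V` is a `k`-monopoly for every admissible `k`, so `M_k(G) = n` says that no proper subset is a
`k`-monopoly. A proper monopoly `M` misses some vertex `v`, and then each neighbour `u` of `v`
needs `deg u ≥ 2k + 2`; conversely, when every neighbour of `v` has that degree, `V ∖ {v}` is a
`k`-monopoly. So `M_k(G) = n` iff every vertex has a neighbour of degree at most `2k + 1`. As
every degree is at least `δ ≥ 2k`, this forces `k = ⌊δ/2⌋`, and the parity of `δ` decides
whether degree `δ + 1` is still allowed.
-/

open Finset

namespace SimpleGraph

variable {V : Type*} [Fintype V] (G : SimpleGraph V) [DecidableRel G.Adj]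

lemma nonempty_of_minDegree_pos (h : 0 < G.minDegree) : Nonempty V := by
  by_contra hV
  have := not_nonempty_iff.mp hV
  rw [G.minDegree_of_subsingleton] at h
  exact h.false

lemma forall_exists_adj_degree_le_iff :
    (∀ v, ∃ u, G.Adj v u ∧ (G.degree u : ℤ) ≤ 2 * (G.minDegree / 2 : ℕ) + 1) ↔
      (Even G.minDegree ∧ ∀ v, ∃ u, G.Adj v u ∧
          (G.degree u = G.minDegree ∨ G.degree u = G.minDegree + 1)) ∨
        (Odd G.minDegree ∧ ∀ v, ∃ u, G.Adj v u ∧ G.degree u = G.minDegree) := by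
  rcases Nat.even_or_odd G.minDegree with hpar | hpar
  · simp only [hpar, Nat.not_odd_iff_even.mpr hpar, true_and, false_and, or_false]
    refine forall_congr' fun v => exists_congr fun u => and_congr_right fun _ => ?_
    have := G.minDegree_le_degree u
    rw [Nat.even_iff] at hpar
    omega
  · simp only [hpar, Nat.not_even_iff_odd.mpr hpar, true_and, false_and, false_or]
    refine forall_congr' fun v => exists_congr fun u => and_congr_right fun _ => ?_
    have := G.minDegree_le_degree u
    rw [Nat.odd_iff] at hpar
    omega

variable [DecidableEq V]

lemma degIn_univ (v : V) : degIn G univ v = G.degree v := by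
  rw [degIn, inter_univ, card_neighborFinset_eq_degree]

lemma degIn_mono {S T : Finset V} (h : S ⊆ T) (v : V) : degIn G S v ≤ degIn G T v :=
  card_le_card (inter_subset_inter_left h)

lemma degIn_univ_erase_of_adj {u v : V} (h : G.Adj u v) :
    degIn G (univ.erase v) u = G.degree u - 1 := by
  rw [degIn, inter_erase, inter_univ, card_erase_of_mem ((mem_neighborFinset _ _ _).mpr h),
    card_neighborFinset_eq_degree]

lemma degIn_univ_erase_of_not_adj {u v : V} (h : ¬G.Adj u v) :
    degIn G (univ.erase v) u = G.degree u := by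
  rw [degIn, inter_erase, inter_univ, erase_eq_of_notMem ((mem_neighborFinset _ _ _).not.mpr h),
    card_neighborFinset_eq_degree]

lemma isKMonopoly_iff {k : ℤ} {M : Finset V} :
    IsKMonopoly G k M ↔ M.Nonempty ∧ ∀ v, (G.degree v : ℤ) + 2 * k ≤ 2 * degIn G M v := by
  refine and_congr_right fun _ => forall_congr' fun v => ?_
  rw [ge_iff_le, ← @Int.cast_le ℚ]
  push_cast
  constructor <;> intro h <;> linarith

lemma isKMonopoly_univ [Nonempty V] {k : ℤ} (hk : 2 * k ≤ G.minDegree) :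
    IsKMonopoly G k univ := by
  refine (G.isKMonopoly_iff).mpr ⟨univ_nonempty, fun v => ?_⟩
  have := G.minDegree_le_degree v
  rw [degIn_univ]
  omega

lemma eq_univ_of_isKMonopoly {k : ℤ} {M : Finset V} (hM : IsKMonopoly G k M)
    (h : ∀ v, ∃ u, G.Adj v u ∧ (G.degree u : ℤ) ≤ 2 * k + 1) : M = univ := by
  refine eq_univ_of_forall fun v => ?_
  by_contra hv
  obtain ⟨u, hvu, hu⟩ := h v
  have hsub : M ⊆ univ.erase v := fun x hx =>
    mem_erase.mpr ⟨fun hxv => hv (hxv ▸ hx), mem_univ x⟩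
  have hle := G.degIn_mono hsub u
  rw [degIn_univ_erase_of_adj G hvu.symm] at hle
  have hpos : 0 < G.degree u := G.degree_pos_iff_exists_adj u |>.mpr ⟨v, hvu.symm⟩
  have := ((G.isKMonopoly_iff).mp hM).2 u
  omega

lemma isKMonopoly_univ_erase {k : ℤ} (hk : 2 * k ≤ G.minDegree) {v : V}
    (hv : (univ.erase v).Nonempty) (h : ∀ u, G.Adj v u → 2 * k + 2 ≤ G.degree u) :
    IsKMonopoly G k (univ.erase v) := by
  refine (G.isKMonopoly_iff).mpr ⟨hv, fun u => ?_⟩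
  have := G.minDegree_le_degree u
  by_cases huv : G.Adj u v
  · have := h u huv.symm
    rw [degIn_univ_erase_of_adj G huv]
    omega
  · rw [degIn_univ_erase_of_not_adj G huv]
    omega

lemma monopolyNumber_eq_card_iff {k : ℤ} (hU : IsKMonopoly G k univ) :
    monopolyNumber G k = Fintype.card V ↔ ∀ M, IsKMonopoly G k M → M = univ := by
  have hmem : Fintype.card V ∈ {n | ∃ M, IsKMonopoly G k M ∧ M.card = n} :=
    ⟨univ, hU, card_univ⟩
  constructor
  · intro h M hM
    by_contra hne
    have hle : monopolyNumber G k ≤ M.card := Nat.sInf_le ⟨M, hM, rfl⟩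
    have := card_lt_card (ssubset_univ_iff.mpr hne)
    rw [card_univ] at this
    omega
  · intro h
    refine le_antisymm (Nat.sInf_le hmem) (le_csInf ⟨_, hmem⟩ ?_)
    rintro _ ⟨M, hM, rfl⟩
    rw [h M hM, card_univ]

lemma monopolyNumber_eq_card_iff_forall_exists_adj (hδ : 1 ≤ G.minDegree) {k : ℤ}
    (hk : 2 * k ≤ G.minDegree) :
    monopolyNumber G k = Fintype.card V ↔
      ∀ v, ∃ u, G.Adj v u ∧ (G.degree u : ℤ) ≤ 2 * k + 1 := by
  have := G.nonempty_of_minDegree_pos hδ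
  rw [monopolyNumber_eq_card_iff G (G.isKMonopoly_univ hk)]
  refine ⟨fun h v => ?_, fun h M hM => G.eq_univ_of_isKMonopoly hM h⟩
  by_contra! hv
  obtain ⟨w, hvw⟩ := (G.degree_pos_iff_exists_adj v).mp (hδ.trans (G.minDegree_le_degree v))
  have hne : (univ.erase v).Nonempty := ⟨w, mem_erase.mpr ⟨hvw.ne.symm, mem_univ w⟩⟩
  have := h _ (G.isKMonopoly_univ_erase hk hne fun u hu => by have := hv u hu; omega)
  exact erase_eq_self.mp this (mem_univ v)

end SimpleGraph

theorem stmt11_general {V : Type*} [Fintype V] [DecidableEq V] (G : SimpleGraph V) [DecidableRel G.Adj]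
    (hδ : 1 ≤ G.minDegree) (k : ℤ)
    (hk1 : k ≤ ⌊(G.minDegree : ℚ) / 2⌋) :
    monopolyNumber G k = Fintype.card V ↔
      (k = ⌊(G.minDegree : ℚ) / 2⌋ ∧
        ((Even G.minDegree ∧ ∀ v : V, ∃ u : V, G.Adj v u ∧
            (G.degree u = G.minDegree ∨ G.degree u = G.minDegree + 1)) ∨
          (Odd G.minDegree ∧ ∀ v : V, ∃ u : V, G.Adj v u ∧ G.degree u = G.minDegree))) := by
  have hfloor : ⌊(G.minDegree : ℚ) / 2⌋ = (G.minDegree / 2 : ℕ) := by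
    exact_mod_cast Rat.floor_natCast_div_natCast G.minDegree 2
  rw [hfloor] at hk1 ⊢
  have hk : 2 * k ≤ G.minDegree := by omega
  rw [G.monopolyNumber_eq_card_iff_forall_exists_adj hδ hk, ← G.forall_exists_adj_degree_le_iff]
  refine ⟨fun h => ?_, fun ⟨hk_eq, h⟩ => hk_eq ▸ h⟩
  obtain ⟨v⟩ := G.nonempty_of_minDegree_pos hδ
  obtain ⟨u, -, hu⟩ := h v
  have := G.minDegree_le_degree u
  have hk_eq : k = (G.minDegree / 2 : ℕ) := by omega
  exact ⟨hk_eq, hk_eq ▸ h⟩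

theorem stmt11 {V : Type*} [Fintype V] [DecidableEq V] (G : SimpleGraph V) [DecidableRel G.Adj]
    (hδ : 1 ≤ G.minDegree) (k : ℤ)
    (hk0 : 1 - ⌈(G.minDegree : ℚ) / 2⌉ ≤ k) (hk1 : k ≤ ⌊(G.minDegree : ℚ) / 2⌋) :
    monopolyNumber G k = Fintype.card V ↔
      (k = ⌊(G.minDegree : ℚ) / 2⌋ ∧
        ((Even G.minDegree ∧ ∀ v : V, ∃ u : V, G.Adj v u ∧
            (G.degree u = G.minDegree ∨ G.degree u = G.minDegree + 1)) ∨
          (Odd G.minDegree ∧ ∀ v : V, ∃ u : V, G.Adj v u ∧ G.degree u = G.minDegree))) :=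
  stmt11_general G hδ k hk1
end

section
/- For every complete bipartite graph K_{r,t} and every integer k with 1−⌈min(r,t)/2⌉ ≤ k ≤ ⌊min(r,t)/2⌋, the open k-monopoly number is M_k(K_{r,t}) = ⌈(r+2k)/2⌉ + ⌈(t+2k)/2⌉. -/
/-! In `K_{r,t}` every vertex of one part is adjacent to exactly the vertices of the other
part, so `M` is an open `k`-monopoly iff `M ∩ X` has at least `⌈(r + 2k)/2⌉` vertices and `M ∩ Y`
at least `⌈(t + 2k)/2⌉`. For `-min(r,t)/2 < k ≤ min(r,t)/2` both thresholds lie between `1` and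
the size of their part, so taking exactly that many vertices from each part is optimal. -/

open Finset

attribute [local instance] Classical.propDecidable

open SimpleGraph

/-- The least number of `M`-neighbours a vertex of degree `d` needs; `toNat` clips a negative
ceiling to `0`. -/
def monopolyThreshold (d : ℕ) (k : ℤ) : ℕ := ⌈((d : ℚ) + 2 * k) / 2⌉.toNat

section Threshold

variable {d : ℕ} {k : ℤ}

lemma half_add_le_iff_monopolyThreshold_le {n : ℕ} :
    (d : ℚ) / 2 + k ≤ n ↔ monopolyThreshold d k ≤ n := by
  rw [monopolyThreshold, Int.toNat_le, Int.ceil_le]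
  push_cast
  constructor <;> intro <;> linarith

lemma monopolyThreshold_le (h : (k : ℚ) ≤ d / 2) : monopolyThreshold d k ≤ d :=
  half_add_le_iff_monopolyThreshold_le.1 (by linarith)

lemma monopolyThreshold_pos (h : -((d : ℚ) / 2) < k) : 0 < monopolyThreshold d k := by
  rw [monopolyThreshold, Int.lt_toNat, Int.lt_ceil]
  push_cast
  linarith

lemma cast_monopolyThreshold (h : -((d : ℚ) / 2) ≤ k) :
    (monopolyThreshold d k : ℤ) = ⌈((d : ℚ) + 2 * k) / 2⌉ :=
  Int.toNat_of_nonneg (Int.ceil_nonneg (by linarith))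

end Threshold

section CompleteBipartite

variable {V W : Type*} [Fintype V] [Fintype W] [DecidableRel (completeBipartiteGraph V W).Adj]

lemma neighborFinset_completeBipartiteGraph_inl (v : V) :
    (completeBipartiteGraph V W).neighborFinset (.inl v) = univ.map .inr := by
  ext x; cases x <;> simp

lemma neighborFinset_completeBipartiteGraph_inr (w : W) :
    (completeBipartiteGraph V W).neighborFinset (.inr w) = univ.map .inl := by
  ext x; cases x <;> simp

lemma degree_completeBipartiteGraph_inl (v : V) :
    (completeBipartiteGraph V W).degree (.inl v) = Fintype.card W := by
  rw [← card_neighborFinset_eq_degree, neighborFinset_completeBipartiteGraph_inl, card_map,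
    card_univ]

lemma degree_completeBipartiteGraph_inr (w : W) :
    (completeBipartiteGraph V W).degree (.inr w) = Fintype.card V := by
  rw [← card_neighborFinset_eq_degree, neighborFinset_completeBipartiteGraph_inr, card_map,
    card_univ]

variable [DecidableEq (V ⊕ W)] {k : ℤ}

lemma degIn_completeBipartiteGraph_inl (M : Finset (V ⊕ W)) (v : V) :
    degIn (completeBipartiteGraph V W) M (.inl v) = #M.toRight := by
  rw [degIn, neighborFinset_completeBipartiteGraph_inl,
    show univ.map .inr ∩ M = M.toRight.map .inr by ext x; cases x <;> simp, card_map]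

lemma degIn_completeBipartiteGraph_inr (M : Finset (V ⊕ W)) (w : W) :
    degIn (completeBipartiteGraph V W) M (.inr w) = #M.toLeft := by
  rw [degIn, neighborFinset_completeBipartiteGraph_inr,
    show univ.map .inl ∩ M = M.toLeft.map .inl by ext x; cases x <;> simp, card_map]


lemma isKMonopoly_completeBipartiteGraph_iff [Nonempty V] [Nonempty W] {M : Finset (V ⊕ W)} :
    IsKMonopoly (completeBipartiteGraph V W) k M ↔ M.Nonempty ∧
      monopolyThreshold (Fintype.card V) k ≤ #M.toLeft ∧
      monopolyThreshold (Fintype.card W) k ≤ #M.toRight := by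
  simp only [IsKMonopoly, Sum.forall, degIn_completeBipartiteGraph_inl,
    degIn_completeBipartiteGraph_inr, degree_completeBipartiteGraph_inl,
    degree_completeBipartiteGraph_inr, ge_iff_le, half_add_le_iff_monopolyThreshold_le,
    forall_const]
  tauto

theorem monopolyNumber_completeBipartiteGraph
    (hk0 : -((min (Fintype.card V) (Fintype.card W) : ℚ) / 2) < k)
    (hk1 : k ≤ (min (Fintype.card V) (Fintype.card W) : ℚ) / 2) :
    monopolyNumber (completeBipartiteGraph V W) k =
      monopolyThreshold (Fintype.card V) k + monopolyThreshold (Fintype.card W) k := by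
  have hVk0 : -((Fintype.card V : ℚ) / 2) < k := by
    linarith [min_le_left (Fintype.card V : ℚ) (Fintype.card W)]
  have hWk0 : -((Fintype.card W : ℚ) / 2) < k := by
    linarith [min_le_right (Fintype.card V : ℚ) (Fintype.card W)]
  have hVk1 : (k : ℚ) ≤ Fintype.card V / 2 := hk1.trans (by gcongr; exact min_le_left _ _)
  have hWk1 : (k : ℚ) ≤ Fintype.card W / 2 := hk1.trans (by gcongr; exact min_le_right _ _)
  have : Nonempty V := Fintype.card_pos_iff.1 
    (by exact_mod_cast (by linarith : (0 : ℚ) < Fintype.card V))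
  have : Nonempty W := Fintype.card_pos_iff.1 
    (by exact_mod_cast (by linarith : (0 : ℚ) < Fintype.card W))
  refine IsLeast.csInf_eq ⟨?_, ?_⟩
  · obtain ⟨s, -, hs⟩ := exists_subset_card_eq
      (by simpa using monopolyThreshold_le hVk1 : monopolyThreshold _ k ≤ #(univ : Finset V))
    obtain ⟨u, -, hu⟩ := exists_subset_card_eq
      (by simpa using monopolyThreshold_le hWk1 : monopolyThreshold _ k ≤ #(univ : Finset W))
    refine ⟨s.disjSum u, isKMonopoly_completeBipartiteGraph_iff.2 ⟨?_, ?_, ?_⟩, ?_⟩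
    · rw [← card_pos, card_disjSum, hs]
      exact Nat.add_pos_left (monopolyThreshold_pos hVk0) _
    · rw [toLeft_disjSum, hs]
    · rw [toRight_disjSum, hu]
    · rw [card_disjSum, hs, hu]
  · rintro _ ⟨M, hM, rfl⟩
    obtain ⟨-, hleft, hright⟩ := isKMonopoly_completeBipartiteGraph_iff.1 hM
    rw [← card_toLeft_add_card_toRight]
    exact add_le_add hleft hright

end CompleteBipartite

theorem stmt14 (r t : ℕ) (k : ℤ)
    (hk0 : 1 - ⌈(min r t : ℚ) / 2⌉ ≤ k) (hk1 : k ≤ ⌊(min r t : ℚ) / 2⌋) :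
    (monopolyNumber (completeBipartiteGraph (Fin r) (Fin t)) k : ℤ) =
      ⌈((r : ℚ) + 2 * k) / 2⌉ + ⌈((t : ℚ) + 2 * k) / 2⌉ := by
  have hk0' : -((min r t : ℚ) / 2) < k := by
    have := Int.lt_ceil.1 (by omega : -k < ⌈(min r t : ℚ) / 2⌉)
    push_cast at this
    linarith
  have hk1' : (k : ℚ) ≤ (min r t : ℚ) / 2 := Int.le_floor.1 hk1
  rw [monopolyNumber_completeBipartiteGraph (by simpa using hk0') (by simpa using hk1'),
    Nat.cast_add, Fintype.card_fin, Fintype.card_fin,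
    cast_monopolyThreshold (by linarith [min_le_left (r : ℚ) t]),
    cast_monopolyThreshold (by linarith [min_le_right (r : ℚ) t])]
end

section
/- For the path P_n (n ≥ 2), the open 0-monopoly number is M_0(P_n) = n/2 if n ≡ 0 (mod 4), (n+2)/2 if n ≡ 2 (mod 4), and (n+1)/2 if n is odd. -/
open Finset

attribute [local instance] Classical.propDecidable

/-!
When every degree is `1` or `2`, an open `0`-monopoly is exactly a total dominating set: every
vertex needs a neighbour in `M`. On a path neighbours have opposite parity, so the `⌊n/2⌋` odd
vertices are dominated by the even members of `M`, each dominating at most two of them, and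
symmetrically the `⌈n/2⌉` even vertices by the odd members. Hence
`|M| ≥ ⌈⌊n/2⌋/2⌉ + ⌈⌈n/2⌉/2⌉`, which is the stated value in each residue class of `n` mod
`4`; the blocks `{1, 2}, {5, 6}, …` together with the penultimate vertex attain it.
-/

open SimpleGraph

section General

variable {V : Type*} [Fintype V] [DecidableEq V] (G : SimpleGraph V) [DecidableRel G.Adj]

lemma degIn_pos_iff {M : Finset V} {v : V} : 0 < degIn G M v ↔ ∃ m ∈ M, G.Adj v m := by
  simp [degIn, card_pos, Finset.Nonempty, and_comm]

lemma isKMonopoly_zero_iff {M : Finset V} :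
    IsKMonopoly G 0 M ↔ M.Nonempty ∧ ∀ v, G.degree v ≤ 2 * degIn G M v := by
  refine and_congr_right fun _ => forall_congr' fun v => ?_
  rw [Int.cast_zero, add_zero, ge_iff_le, div_le_iff₀ two_pos, ← Nat.cast_ofNat,
    ← Nat.cast_mul, Nat.cast_le, mul_comm]

lemma isKMonopoly_zero_iff_forall_exists_adj [Nonempty V] (hpos : ∀ v, 0 < G.degree v)
    (hle : ∀ v, G.degree v ≤ 2) {M : Finset V} :
    IsKMonopoly G 0 M ↔ ∀ v, ∃ m ∈ M, G.Adj v m := by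
  simp_rw [isKMonopoly_zero_iff, ← degIn_pos_iff]
  refine ⟨fun ⟨_, h⟩ v => by linarith [h v, hpos v],
    fun h => ⟨?_, fun v => by linarith [h v, hle v]⟩⟩
  obtain ⟨m, hm, -⟩ := (degIn_pos_iff G).1 (h (Classical.arbitrary V))
  exact ⟨m, hm⟩

lemma card_le_mul_card_of_forall_exists_adj {d : ℕ} (hd : ∀ v, G.degree v ≤ d)
    {S T : Finset V} (hT : ∀ t ∈ T, ∃ s ∈ S, G.Adj t s) : #T ≤ d * #S := by
  have hsub : T ⊆ S.biUnion fun s => G.neighborFinset s := fun t ht => by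
    obtain ⟨s, hs, hadj⟩ := hT t ht
    exact mem_biUnion.2 ⟨s, hs, (G.mem_neighborFinset s t).2 hadj.symm⟩
  calc #T ≤ ∑ s ∈ S, #(G.neighborFinset s) := (card_le_card hsub).trans card_biUnion_le
    _ ≤ ∑ _s ∈ S, d :=
        sum_le_sum fun s _ => (G.card_neighborFinset_eq_degree s).trans_le (hd s)
    _ = d * #S := by rw [sum_const, smul_eq_mul, mul_comm]

end General

lemma Fin.card_filter_val_eq_count (n : ℕ) (p : ℕ → Prop) [DecidablePred p] :
    #{v : Fin n | p v.val} = Nat.count p n := by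
  rw [Nat.count_eq_card_filter_range, ← Nat.Iio_eq_range, ← Fin.map_valEmbedding_univ,
    filter_map, card_map]
  rfl

lemma Nat.count_mod_two_eq_one (n : ℕ) : Nat.count (· % 2 = 1) n = n / 2 := by
  induction n with
  | zero => rfl
  | succ n ih => rw [Nat.count_succ, ih]; split_ifs <;> omega

lemma Nat.count_mod_two_eq_zero (n : ℕ) : Nat.count (· % 2 = 0) n = (n + 1) / 2 := by
  induction n with
  | zero => rfl
  | succ n ih => rw [Nat.count_succ, ih]; split_ifs <;> omega

lemma Nat.count_mod_four_eq_one_or_two (n : ℕ) :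
    Nat.count (fun i => i % 4 = 1 ∨ i % 4 = 2) n = (n + 2) / 4 + (n + 1) / 4 := by
  induction n with
  | zero => rfl
  | succ n ih => rw [Nat.count_succ, ih]; split_ifs <;> omega

section Path

variable {n : ℕ}

lemma pathGraph_degree_le_two (v : Fin n) : (pathGraph n).degree v ≤ 2 := by
  rw [← card_neighborFinset_eq_degree]
  calc #((pathGraph n).neighborFinset v) ≤ #({v.val - 1, v.val + 1} : Finset ℕ) := by
        refine card_le_card_of_injOn Fin.val (fun u hu => ?_) Fin.val_injective.injOn
        have := pathGraph_adj.1 ((mem_neighborFinset _ _ _).1 hu)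
        simp only [coe_insert, coe_singleton, Set.mem_insert_iff, Set.mem_singleton_iff]
        omega
    _ ≤ 2 := card_le_two

lemma pathGraph_degree_pos (hn : 2 ≤ n) (v : Fin n) : 0 < (pathGraph n).degree v := by
  rw [degree_pos_iff_exists_adj]
  by_cases hv : v.val + 1 < n
  · exact ⟨⟨v.val + 1, hv⟩, pathGraph_adj.2 (Or.inl rfl)⟩
  · exact ⟨⟨v.val - 1, by omega⟩, pathGraph_adj.2 (Or.inr (by simp only; omega))⟩

lemma isKMonopoly_pathGraph_zero_iff (hn : 2 ≤ n) {M : Finset (Fin n)} :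
    IsKMonopoly (pathGraph n) 0 M ↔ ∀ v, ∃ m ∈ M, (pathGraph n).Adj v m :=
  haveI : Nonempty (Fin n) := ⟨⟨0, by omega⟩⟩
  isKMonopoly_zero_iff_forall_exists_adj _ (pathGraph_degree_pos hn) pathGraph_degree_le_two

lemma pathGraph_count_mod_two_le_two_mul_card {M : Finset (Fin n)}
    (hM : ∀ v, ∃ m ∈ M, (pathGraph n).Adj v m) (r : ℕ) :
    Nat.count (· % 2 = r) n ≤ 2 * #{m ∈ M | m.val % 2 ≠ r} := by
  rw [← Fin.card_filter_val_eq_count]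
  refine card_le_mul_card_of_forall_exists_adj _ pathGraph_degree_le_two fun t ht => ?_
  obtain ⟨m, hm, hadj⟩ := hM t
  have := pathGraph_adj.1 hadj
  exact ⟨m, mem_filter.2 ⟨hm, by rw [← (mem_filter.1 ht).2]; omega⟩, hadj⟩

lemma pathGraph_le_card_of_forall_exists_adj {M : Finset (Fin n)}
    (hM : ∀ v, ∃ m ∈ M, (pathGraph n).Adj v m) :
    (n / 2 + 1) / 2 + ((n + 1) / 2 + 1) / 2 ≤ #M := by
  have hodd := pathGraph_count_mod_two_le_two_mul_card hM 1
  have heven := pathGraph_count_mod_two_le_two_mul_card hM 0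
  rw [Nat.count_mod_two_eq_one] at hodd
  rw [Nat.count_mod_two_eq_zero] at heven
  have hsplit := card_filter_add_card_filter_not (s := M) fun m => m.val % 2 ≠ 1
  have hnot : {m ∈ M | ¬m.val % 2 ≠ 1} = {m ∈ M | m.val % 2 ≠ 0} :=
    filter_congr fun m _ => by omega
  rw [hnot] at hsplit
  omega

def pathMonopoly (n : ℕ) : Finset (Fin n) :=
  {v | v.val % 4 = 1 ∨ v.val % 4 = 2 ∨ v.val + 2 = n}

lemma pathMonopoly_forall_exists_adj (hn : 2 ≤ n) (v : Fin n) :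
    ∃ m ∈ pathMonopoly n, (pathGraph n).Adj v m := by
  simp only [pathMonopoly, mem_filter, mem_univ, true_and]
  by_cases hv : (v.val % 4 = 0 ∨ v.val % 4 = 1) ∧ v.val + 1 < n
  · exact ⟨⟨v.val + 1, hv.2⟩, by simp only; omega, pathGraph_adj.2 (Or.inl rfl)⟩
  · exact ⟨⟨v.val - 1, by omega⟩, by simp only; omega,
      pathGraph_adj.2 (Or.inr (by simp only; omega))⟩

lemma card_pathMonopoly (hn : 2 ≤ n) :
    #(pathMonopoly n) = (n + 2) / 4 + (n + 1) / 4 + if n % 4 = 1 ∨ n % 4 = 2 then 1 else 0 := by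
  have hinsert : pathMonopoly n =
      insert ⟨n - 2, by omega⟩ ({v | v.val % 4 = 1 ∨ v.val % 4 = 2} : Finset (Fin n)) := by
    ext v
    simp only [pathMonopoly, mem_insert, mem_filter, mem_univ, true_and, Fin.ext_iff]
    omega
  rw [hinsert, card_insert_eq_ite, Fin.card_filter_val_eq_count n fun i => i % 4 = 1 ∨ i % 4 = 2,
    Nat.count_mod_four_eq_one_or_two]
  simp only [mem_filter, mem_univ, true_and]
  split_ifs <;> omega

end Path

theorem stmt16 (n : ℕ) (hn : 2 ≤ n) :
    monopolyNumber (SimpleGraph.pathGraph n) 0 =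
      if n % 4 = 0 then n / 2 else if n % 4 = 2 then (n + 2) / 2 else (n + 1) / 2 := by
  refine IsLeast.csInf_eq ⟨⟨pathMonopoly n, ?_, ?_⟩, ?_⟩
  · exact (isKMonopoly_pathGraph_zero_iff hn).2 (pathMonopoly_forall_exists_adj hn)
  · rw [card_pathMonopoly hn]
    split_ifs <;> omega
  · rintro _ ⟨M, hM, rfl⟩
    have := pathGraph_le_card_of_forall_exists_adj ((isKMonopoly_pathGraph_zero_iff hn).1 hM)
    split_ifs <;> omega
end

section
/- If a graph G without isolated vertices admits a partition of its vertex set into r ≥ 2 parts each of which is an open k-monopoly in G, then r ≤ 2 − 2k; in particular k ≤ 0. -/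
open Finset

/-! At a vertex `v` of minimum degree `δ`, the monopoly inequality makes every part contain at
least `⌈δ/2⌉ + k ≥ 1` of the `δ` neighbours of `v`. Summing over the parts gives
`r (⌈δ/2⌉ + k) ≤ δ ≤ 2⌈δ/2⌉ = 2 (⌈δ/2⌉ + k) - 2k`, hence `r - 2 ≤ -2k`. -/

section degIn

variable {V : Type*} [Fintype V] [DecidableEq V] (G : SimpleGraph V) [DecidableRel G.Adj]

lemma degIn_add_degIn_compl (S : Finset V) (v : V) :
    degIn G S v + degIn G Sᶜ v = G.degree v := by
  rw [degIn, degIn, ← sdiff_eq_inter_compl, card_inter_add_card_sdiff,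
    G.card_neighborFinset_eq_degree]

lemma sum_degIn_eq_degree {ι : Type*} [Fintype ι] (P : ι → Finset V)
    (hdisj : ∀ i j : ι, i ≠ j → Disjoint (P i) (P j)) (hcover : univ.biUnion P = univ)
    (v : V) :
    ∑ i, degIn G (P i) v = G.degree v := by
  have hdisj' :
      ((univ : Finset ι) : Set ι).PairwiseDisjoint fun i ↦ G.neighborFinset v ∩ P i :=
    fun i _ j _ hij ↦ (hdisj i j hij).mono inter_subset_right inter_subset_right
  simp only [degIn]
  rw [← card_biUnion hdisj', ← inter_biUnion, hcover, inter_univ,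
    G.card_neighborFinset_eq_degree]

lemma ceil_half_degree_add_le_degIn {S : Finset V} {v : V} {k : ℤ}
    (hS : (degIn G Sᶜ v : ℤ) + 2 * k ≤ degIn G S v) :
    ⌈(G.degree v : ℚ) / 2⌉ + k ≤ degIn G S v := by
  have hsplit : (degIn G S v : ℤ) + degIn G Sᶜ v = G.degree v := by
    exact_mod_cast degIn_add_degIn_compl G S v
  rw [← le_sub_iff_add_le, Int.ceil_le, div_le_iff₀ two_pos]
  exact_mod_cast (by omega : (G.degree v : ℤ) ≤ (degIn G S v - k) * 2)

lemma card_mul_ceil_half_degree_add_le_degree {ι : Type*} [Fintype ι] (P : ι → Finset V)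
    (hdisj : ∀ i j : ι, i ≠ j → Disjoint (P i) (P j)) (hcover : univ.biUnion P = univ)
    (v : V) (k : ℤ) (hP : ∀ i, (degIn G (P i)ᶜ v : ℤ) + 2 * k ≤ degIn G (P i) v) :
    Fintype.card ι * (⌈(G.degree v : ℚ) / 2⌉ + k) ≤ G.degree v := by
  calc Fintype.card ι * (⌈(G.degree v : ℚ) / 2⌉ + k)
      = ∑ _i : ι, (⌈(G.degree v : ℚ) / 2⌉ + k) := by simp
    _ ≤ ∑ i, (degIn G (P i) v : ℤ) :=
      sum_le_sum fun i _ ↦ ceil_half_degree_add_le_degIn G (hP i)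
    _ = G.degree v := by exact_mod_cast sum_degIn_eq_degree G P hdisj hcover v

end degIn

theorem stmt17_general {V : Type*} [Fintype V] [DecidableEq V] (G : SimpleGraph V) [DecidableRel G.Adj]
    (k : ℤ)
    (hk0 : 1 - ⌈(G.minDegree : ℚ) / 2⌉ ≤ k)
    (r : ℕ) (hr : 2 ≤ r) (P : Fin r → Finset V)
    (hdisj : ∀ i j : Fin r, i ≠ j → Disjoint (P i) (P j))
    (hcover : Finset.univ.biUnion P = Finset.univ)
    (hmon : ∀ i : Fin r, (P i).Nonempty ∧
      ∀ v : V, (degIn G (P i) v : ℤ) ≥ (degIn G (P i)ᶜ v : ℤ) + 2 * k) :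
    (r : ℤ) ≤ 2 - 2 * k ∧ k ≤ 0 := by
  obtain ⟨u, -⟩ := (hmon ⟨0, by omega⟩).1
  have : Nonempty V := ⟨u⟩
  obtain ⟨v, hv⟩ := G.exists_minimal_degree_vertex
  have hbound :=
    card_mul_ceil_half_degree_add_le_degree G P hdisj hcover v k fun i ↦ (hmon i).2 v
  rw [Fintype.card_fin, ← hv] at hbound
  set m := ⌈(G.minDegree : ℚ) / 2⌉
  have hm : (G.minDegree : ℤ) ≤ 2 * m := by
    have := Int.le_ceil ((G.minDegree : ℚ) / 2)
    exact_mod_cast (by linarith : (G.minDegree : ℚ) ≤ 2 * m)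
  have hr' : (2 : ℤ) ≤ r := by exact_mod_cast hr
  have hdiff : ((r : ℤ) - 2) * (m + k) ≤ -2 * k := by linarith
  have hone : (r : ℤ) - 2 ≤ ((r : ℤ) - 2) * (m + k) :=
    le_mul_of_one_le_right (by linarith) (by linarith)
  constructor <;> linarith

theorem stmt17 {V : Type*} [Fintype V] [DecidableEq V] (G : SimpleGraph V) [DecidableRel G.Adj]
    (hniso : ∀ v : V, 0 < G.degree v) (k : ℤ)
    (hk0 : 1 - ⌈(G.minDegree : ℚ) / 2⌉ ≤ k) (hk1 : k ≤ ⌊(G.minDegree : ℚ) / 2⌋)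
    (r : ℕ) (hr : 2 ≤ r) (P : Fin r → Finset V)
    (hdisj : ∀ i j : Fin r, i ≠ j → Disjoint (P i) (P j))
    (hcover : Finset.univ.biUnion P = Finset.univ)
    (hmon : ∀ i : Fin r, (P i).Nonempty ∧
      ∀ v : V, (degIn G (P i) v : ℤ) ≥ (degIn G (P i)ᶜ v : ℤ) + 2 * k) :
    (r : ℤ) ≤ 2 - 2 * k ∧ k ≤ 0 :=
  stmt17_general G k hk0 r hr P hdisj hcover hmon
end
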